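/- Under Assumptions U and F, for every w ∈ ℝ^d and λ ∈ C, the dual solutions satisfy ‖v*(w, λ) − v*(λ)‖ ≤ M_{v*}‖w − w*(λ)‖, where M_{v*} := L_{U,0}L^{ww}_{F,2}/μ_F² + L_{U,1}/μ_F. -/

import Mathlib

/-!
Strong convexity of `F(·, λ)` makes `t ↦ ⟪v, ∇_w F(w + t v, λ)⟫ - μ ⟪v, w + t v⟫` monotone, the
derivative of the convex function `t ↦ F(w + t v, λ) - μ/2 ‖w + t v‖²`; differentiating at `t = 0`
gives `⟪v, ∇²_{ww}F v⟫ ≥ μ ‖v‖²`, hence `‖∇²_{ww}F v‖ ≥ μ ‖v‖`.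

For two systems `H₁ v₁ = b₁`, `H₂ v₂ = b₂` with such lower bounds, the identity
`H₁ (v₁ - v₂) = (b₁ - b₂) - (H₁ - H₂) v₂` and `‖v₂‖ ≤ ‖b₂‖ / μ` give
`‖v₁ - v₂‖ ≤ ‖b₂‖ ‖H₁ - H₂‖ / μ² + ‖b₁ - b₂‖ / μ`. Here `b = ∇_w U`, which is bounded by `L_{U,0}`
because `U` is `L_{U,0}`-Lipschitz, and the Lipschitz bounds on `∇U` and `∇²_{ww}F` control
`b₁ - b₂` and `H₁ - H₂` by multiples of `‖w - w*(λ)‖`.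
-/

open MeasureTheory Finset

noncomputable section

/-- The model space `ℝ^d`. -/
abbrev Wsp (d : ℕ) : Type := EuclideanSpace ℝ (Fin d)

/-- The weight space `ℝ^S`. -/
abbrev Lsp (S : ℕ) : Type := EuclideanSpace ℝ (Fin S)

/-- Partial gradient `∇_w G(w, λ)`. -/
noncomputable def gradW {d S : ℕ} (G : Wsp d → Lsp S → ℝ) (w : Wsp d) (l : Lsp S) : Wsp d :=
  gradient (fun w' => G w' l) w

/-- Partial gradient `∇_λ G(w, λ)`. -/
noncomputable def gradL {d S : ℕ} (G : Wsp d → Lsp S → ℝ) (w : Wsp d) (l : Lsp S) : Lsp S :=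
  gradient (fun l' => G w l') l

/-- Hessian `∇²_{ww} G(w, λ)`, as a continuous linear map. -/
noncomputable def hessWW {d S : ℕ} (G : Wsp d → Lsp S → ℝ) (w : Wsp d) (l : Lsp S) :
    Wsp d →L[ℝ] Wsp d :=
  fderiv ℝ (fun w' => gradW G w' l) w

/-- Cross Hessian `∇²_{wλ} G(w, λ)`, as a continuous linear map `ℝ^S →L ℝ^d`. -/
noncomputable def hessWL {d S : ℕ} (G : Wsp d → Lsp S → ℝ) (w : Wsp d) (l : Lsp S) :
    Lsp S →L[ℝ] Wsp d :=
  fderiv ℝ (fun l' => gradW G w l') l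

open InnerProductSpace
open scoped RealInnerProductSpace Gradient

section StrongConvexity

variable {E : Type*} [NormedAddCommGroup E] [InnerProductSpace ℝ E] [CompleteSpace E]
  {f : E → ℝ} {f' : E → E} {μ : ℝ}

lemma StrongConvexOn.monotone_inner_gradient_sub (hf : StrongConvexOn Set.univ μ f)
    (hf' : ∀ y, HasGradientAt f (f' y) y) (x v : E) :
    Monotone fun t : ℝ => ⟪v, f' (x + t • v)⟫ - μ * ⟪v, x + t • v⟫ := by
  have hline : ∀ t : ℝ, HasDerivAt (fun t : ℝ => x + t • v) v t := fun t => by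
    simpa using ((hasDerivAt_id t).smul_const v).const_add x
  have hconv : ConvexOn ℝ Set.univ fun t : ℝ => f (x + t • v) - μ / 2 * ‖x + t • v‖ ^ 2 := by
    have := (strongConvexOn_iff_convex.mp hf).comp_affineMap (AffineMap.lineMap x (x + v))
    rw [Set.preimage_univ] at this
    have e : (fun y => f y - μ / 2 * ‖y‖ ^ 2) ∘ AffineMap.lineMap x (x + v) =
        fun t : ℝ => f (x + t • v) - μ / 2 * ‖x + t • v‖ ^ 2 :=
      funext fun t => by simp [AffineMap.lineMap_apply_module', add_comm]
    rwa [e] at this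
  have hderiv : ∀ t : ℝ, HasDerivAt (fun t : ℝ => f (x + t • v) - μ / 2 * ‖x + t • v‖ ^ 2)
      (⟪v, f' (x + t • v)⟫ - μ * ⟪v, x + t • v⟫) t := by
    intro t
    have h₁ := (hf' (x + t • v)).hasFDerivAt.comp_hasDerivAt t (hline t)
    have h₂ := ((hline t).norm_sq).const_mul (μ / 2)
    refine (h₁.sub h₂).congr_deriv ?_
    simp only [toDual_apply_apply, real_inner_comm]
    ring
  have := hconv.monotoneOn_deriv fun t _ => (hderiv t).differentiableAt
  rwa [show deriv _ = _ from funext fun t => (hderiv t).deriv, monotoneOn_univ] at this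

lemma StrongConvexOn.mul_norm_sq_le_inner_apply (hf : StrongConvexOn Set.univ μ f)
    (hf' : ∀ y, HasGradientAt f (f' y) y) {H : E →L[ℝ] E} {x : E} (hH : HasFDerivAt f' H x)
    (v : E) : μ * ‖v‖ ^ 2 ≤ ⟪v, H v⟫ := by
  have hderiv : HasDerivAt (fun t : ℝ => ⟪v, f' (x + t • v)⟫ - μ * ⟪v, x + t • v⟫)
      (⟪v, H v⟫ - μ * ⟪v, v⟫) 0 := by
    have hline : HasDerivAt (fun t : ℝ => x + t • v) v 0 := by
      simpa using ((hasDerivAt_id (0 : ℝ)).smul_const v).const_add x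
    have hH' : HasFDerivAt f' H (x + (0 : ℝ) • v) := by simpa using hH
    have h₁ := (hasDerivAt_const (0 : ℝ) v).inner ℝ (hH'.comp_hasDerivAt 0 hline)
    have h₂ := ((hasDerivAt_const (0 : ℝ) v).inner ℝ hline).const_mul μ
    simp only [zero_smul, add_zero, inner_zero_left] at h₁ h₂
    exact h₁.sub h₂
  have := (hf.monotone_inner_gradient_sub hf' x v).deriv_nonneg (x := 0)
  rw [hderiv.deriv, real_inner_self_eq_norm_sq] at this
  linarith

lemma StrongConvexOn.mul_norm_le_norm_apply (hf : StrongConvexOn Set.univ μ f)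
    (hf' : ∀ y, HasGradientAt f (f' y) y) {H : E →L[ℝ] E} {x : E} (hH : HasFDerivAt f' H x)
    (v : E) : μ * ‖v‖ ≤ ‖H v‖ := by
  rcases eq_or_ne v 0 with rfl | hv
  · simp
  have hcoer := hf.mul_norm_sq_le_inner_apply hf' hH v
  have hv' : 0 < ‖v‖ := norm_pos_iff.mpr hv
  nlinarith [real_inner_le_norm v (H v)]

end StrongConvexity

section Gradient

variable {E F : Type*} [NormedAddCommGroup E] [InnerProductSpace ℝ E] [CompleteSpace E]
  [NormedAddCommGroup F] [NormedSpace ℝ F]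

lemma ContDiff.differentiable_gradient {f : E → ℝ} (hf : ContDiff ℝ 2 f) :
    Differentiable ℝ (∇ f) :=
  ((toDual ℝ E).symm.toContinuousLinearEquiv.contDiff.comp
    (hf.fderiv_right (by norm_num))).differentiable one_ne_zero

lemma norm_gradient_le_of_lip' {f : E → ℝ} {x : E} {C : ℝ} (hC : 0 ≤ C)
    (hlip : ∀ y, |f y - f x| ≤ C * ‖y - x‖) : ‖∇ f x‖ ≤ C := by
  rw [gradient, LinearIsometryEquiv.norm_map]
  exact norm_fderiv_le_of_lip' ℝ hC (Filter.Eventually.of_forall hlip)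

lemma norm_gradient_sub_le_norm_fderiv_sub {G : E × F → ℝ} (hG : Differentiable ℝ G)
    (x₁ x₂ : E) (y : F) :
    ‖∇ (fun x => G (x, y)) x₁ - ∇ (fun x => G (x, y)) x₂‖ ≤
      ‖fderiv ℝ G (x₁, y) - fderiv ℝ G (x₂, y)‖ := by
  have hpartial : ∀ x, fderiv ℝ (fun x => G (x, y)) x =
      (fderiv ℝ G (x, y)).comp (ContinuousLinearMap.inl ℝ E F) := fun x =>
    ((hG (x, y)).hasFDerivAt.comp x (hasFDerivAt_prodMk_left x y)).fderiv
  rw [gradient, gradient, hpartial, hpartial, ← map_sub, LinearIsometryEquiv.norm_map,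
    ← ContinuousLinearMap.sub_comp]
  calc _ ≤ ‖fderiv ℝ G (x₁, y) - fderiv ℝ G (x₂, y)‖ * ‖ContinuousLinearMap.inl ℝ E F‖ :=
        ContinuousLinearMap.opNorm_comp_le _ _
    _ ≤ _ := mul_le_of_le_one_right (by positivity) (ContinuousLinearMap.norm_inl_le_one _ _ _)

end Gradient

lemma ContinuousLinearMap.norm_sub_le_of_mul_norm_le {𝕜 E F : Type*} [NontriviallyNormedField 𝕜]
    [NormedAddCommGroup E] [NormedSpace 𝕜 E] [NormedAddCommGroup F] [NormedSpace 𝕜 F]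
    {A B : E →L[𝕜] F} {μ : ℝ} (hμ : 0 < μ) (hA : ∀ u, μ * ‖u‖ ≤ ‖A u‖)
    (hB : ∀ u, μ * ‖u‖ ≤ ‖B u‖) (x y : E) :
    ‖x - y‖ ≤ ‖B y‖ * ‖A - B‖ / μ ^ 2 + ‖A x - B y‖ / μ := by
  have hy : ‖y‖ ≤ ‖B y‖ / μ := by rw [le_div_iff₀ hμ, mul_comm]; exact hB y
  have hxy : μ * ‖x - y‖ ≤ ‖A x - B y‖ + ‖A - B‖ * ‖y‖ := calc
    μ * ‖x - y‖ ≤ ‖A (x - y)‖ := hA _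
    _ = ‖(A x - B y) - (A - B) y‖ := by rw [map_sub, sub_apply, sub_sub_sub_cancel_right]
    _ ≤ ‖A x - B y‖ + ‖(A - B) y‖ := norm_sub_le _ _
    _ ≤ ‖A x - B y‖ + ‖A - B‖ * ‖y‖ := by gcongr; exact le_opNorm _ _
  calc ‖x - y‖ ≤ (‖A x - B y‖ + ‖A - B‖ * ‖y‖) / μ := by rwa [le_div_iff₀ hμ, mul_comm]
    _ ≤ (‖A x - B y‖ + ‖A - B‖ * (‖B y‖ / μ)) / μ := by gcongr
    _ = _ := by field_simp; ring

lemma mul_norm_le_norm_hessWW_apply {d S : ℕ} {F : Wsp d → Lsp S → ℝ}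
    (hF : ContDiff ℝ 2 (fun p : Wsp d × Lsp S => F p.1 p.2)) {μ : ℝ} {l : Lsp S}
    (hsc : StrongConvexOn Set.univ μ (fun w => F w l)) (w u : Wsp d) :
    μ * ‖u‖ ≤ ‖hessWW F w l u‖ := by
  have hFl : ContDiff ℝ 2 (fun w => F w l) := hF.comp (contDiff_id.prodMk contDiff_const)
  exact hsc.mul_norm_le_norm_apply (fun y => (hFl.differentiable two_ne_zero y).hasGradientAt)
    (hFl.differentiable_gradient w).hasFDerivAt u

theorem dual_solution_sensitivity_general
    {d S : ℕ}
    (C : Set (Lsp S))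
    (U F : Wsp d → Lsp S → ℝ)
    (hUdiff : ContDiff ℝ 1 (fun p : Wsp d × Lsp S => U p.1 p.2))
    (hFdiff : ContDiff ℝ 2 (fun p : Wsp d × Lsp S => F p.1 p.2))
    (wstar : Lsp S → Wsp d)
    -- Assumption U
    (LU0 LU1 : ℝ) (hLU0 : 0 < LU0)
    (hUlip : ∀ w₁ w₂ : Wsp d, ∀ l₁ ∈ C, ∀ l₂ ∈ C,
      |U w₁ l₁ - U w₂ l₂| ≤ LU0 * ‖((w₁, l₁) : Wsp d × Lsp S) - (w₂, l₂)‖)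
    (hgradUlip : ∀ w₁ w₂ : Wsp d, ∀ l₁ ∈ C, ∀ l₂ ∈ C,
      ‖fderiv ℝ (fun p : Wsp d × Lsp S => U p.1 p.2) (w₁, l₁) -
          fderiv ℝ (fun p : Wsp d × Lsp S => U p.1 p.2) (w₂, l₂)‖ ≤
        LU1 * (‖w₁ - w₂‖ + ‖l₁ - l₂‖))
    -- Assumption F
    (μF LF2ww : ℝ)
    (hμF : 0 < μF)
    (hFsc : ∀ l ∈ C, StrongConvexOn Set.univ μF (fun w => F w l))
    (hhessWWlip : ∀ w₁ w₂ : Wsp d, ∀ l₁ ∈ C, ∀ l₂ ∈ C,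
      ‖hessWW F w₁ l₁ - hessWW F w₂ l₂‖ ≤ LF2ww * (‖w₁ - w₂‖ + ‖l₁ - l₂‖))
    -- the dual solution `v*(w, λ)`, characterized by `∇²_{ww}F(w,λ) v*(w,λ) = ∇_w U(w,λ)`
    (vstar : Wsp d → Lsp S → Wsp d)
    (hvstar : ∀ w : Wsp d, ∀ l ∈ C, hessWW F w l (vstar w l) = gradW U w l)
    : ∀ w : Wsp d, ∀ l ∈ C,
      ‖vstar w l - vstar (wstar l) l‖ ≤
        (LU0 * LF2ww / μF ^ 2 + LU1 / μF) * ‖w - wstar l‖ := by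
  intro w l hl
  have hcoer := mul_norm_le_norm_hessWW_apply hFdiff (hFsc l hl)
  have hgradU : ‖gradW U (wstar l) l‖ ≤ LU0 :=
    norm_gradient_le_of_lip' hLU0.le fun y => by simpa using hUlip y (wstar l) l hl l hl
  have hgradUdiff : ‖gradW U w l - gradW U (wstar l) l‖ ≤ LU1 * ‖w - wstar l‖ := by
    have h := hgradUlip w (wstar l) l hl l hl
    rw [sub_self, norm_zero, add_zero] at h
    exact (norm_gradient_sub_le_norm_fderiv_sub (hUdiff.differentiable one_ne_zero) w _ l).trans h
  have hhess : ‖hessWW F w l - hessWW F (wstar l) l‖ ≤ LF2ww * ‖w - wstar l‖ := by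
    simpa using hhessWWlip w (wstar l) l hl l hl
  calc ‖vstar w l - vstar (wstar l) l‖
      ≤ ‖gradW U (wstar l) l‖ * ‖hessWW F w l - hessWW F (wstar l) l‖ / μF ^ 2 +
          ‖gradW U w l - gradW U (wstar l) l‖ / μF := by
        simpa only [hvstar _ l hl] using ContinuousLinearMap.norm_sub_le_of_mul_norm_le hμF
          (hcoer w) (hcoer (wstar l)) (vstar w l) (vstar (wstar l) l)
    _ ≤ LU0 * (LF2ww * ‖w - wstar l‖) / μF ^ 2 + LU1 * ‖w - wstar l‖ / μF := by gcongr
    _ = _ := by ring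

/-- Sensitivity of the dual solution to the lower variable. -/
theorem dual_solution_sensitivity
    {d S : ℕ} (hd : 1 ≤ d) (hS : 1 ≤ S)
    (C : Set (Lsp S)) (hCne : C.Nonempty) (hCconv : Convex ℝ C) (hCcomp : IsCompact C)
    (U F : Wsp d → Lsp S → ℝ)
    (hUdiff : ContDiff ℝ 1 (fun p : Wsp d × Lsp S => U p.1 p.2))
    (hFdiff : ContDiff ℝ 2 (fun p : Wsp d × Lsp S => F p.1 p.2))
    (wstar : Lsp S → Wsp d)
    (hwstar : ∀ l ∈ C, ∀ w : Wsp d, F (wstar l) l ≤ F w l)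
    -- Assumption U
    (LU0 LU1 : ℝ) (hLU0 : 0 < LU0) (hLU1 : 0 < LU1)
    (hUlip : ∀ w₁ w₂ : Wsp d, ∀ l₁ ∈ C, ∀ l₂ ∈ C,
      |U w₁ l₁ - U w₂ l₂| ≤ LU0 * ‖((w₁, l₁) : Wsp d × Lsp S) - (w₂, l₂)‖)
    (hgradUlip : ∀ w₁ w₂ : Wsp d, ∀ l₁ ∈ C, ∀ l₂ ∈ C,
      ‖fderiv ℝ (fun p : Wsp d × Lsp S => U p.1 p.2) (w₁, l₁) -
          fderiv ℝ (fun p : Wsp d × Lsp S => U p.1 p.2) (w₂, l₂)‖ ≤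
        LU1 * (‖w₁ - w₂‖ + ‖l₁ - l₂‖))
    -- Assumption F
    (μF LF1 LF2ww MC LF2wl : ℝ)
    (hμF : 0 < μF) (hLF1 : μF ≤ LF1) (hLF2ww : 0 ≤ LF2ww) (hMC : 0 < MC) (hLF2wl : 0 < LF2wl)
    (hFsc : ∀ l ∈ C, StrongConvexOn Set.univ μF (fun w => F w l))
    (hgradFlip : ∀ l ∈ C, ∀ w₁ w₂ : Wsp d, ‖gradW F w₁ l - gradW F w₂ l‖ ≤ LF1 * ‖w₁ - w₂‖)
    (hhessWWlip : ∀ w₁ w₂ : Wsp d, ∀ l₁ ∈ C, ∀ l₂ ∈ C,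
      ‖hessWW F w₁ l₁ - hessWW F w₂ l₂‖ ≤ LF2ww * (‖w₁ - w₂‖ + ‖l₁ - l₂‖))
    (hhessWLbd : ∀ l₁ ∈ C, ∀ l₂ ∈ C, ‖hessWL F (wstar l₁) l₂‖ ≤ MC)
    (hhessWLlip : ∀ w₁ w₂ : Wsp d, ∀ l₁ ∈ C, ∀ l₂ ∈ C,
      ‖hessWL F w₁ l₁ - hessWL F w₂ l₂‖ ≤ LF2wl * (‖w₁ - w₂‖ + ‖l₁ - l₂‖))
    -- the dual solution `v*(w, λ)`, characterized by `∇²_{ww}F(w,λ) v*(w,λ) = ∇_w U(w,λ)`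
    (vstar : Wsp d → Lsp S → Wsp d)
    (hvstar : ∀ w : Wsp d, ∀ l ∈ C, hessWW F w l (vstar w l) = gradW U w l)
    : ∀ w : Wsp d, ∀ l ∈ C,
      ‖vstar w l - vstar (wstar l) l‖ ≤
        (LU0 * LF2ww / μF ^ 2 + LU1 / μF) * ‖w - wstar l‖ :=
  dual_solution_sensitivity_general C U F hUdiff hFdiff wstar LU0 LU1 hLU0 hUlip hgradUlip μF LF2ww
    hμF hFsc hhessWWlip vstar hvstar
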